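/- Fix D ≥ 1, let λ : {1, …, D} → ℝ be strictly positive, and let θ : {1, …, D} → Bool have at least two indices set to true. Let i₀ be the least index with θ(i₀) = true and let θ̃ : {1, …, D} → Bool be the indicator of {i₀}. Then Σ_{i : θ̃(i)} λ(i) < Σ_{i : θ(i)} λ(i), and for every i ∈ {1, …, D}: (∃ l ≤ i, θ̃(l) = true) ↔ (∃ l ≤ i, θ(l) = true). -/
import Mathlib


open Finset

/-- Replacing a multi-link selection by its fastest selected link strictly
reduces the communication cost while leaving all arrival predicates unchanged. -/
theorem fastest_link_cheaper (D : ℕ) (hD : 1 ≤ D)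
    (lam : ℕ → ℝ) (hlam : ∀ i, 1 ≤ i → i ≤ D → 0 < lam i)
    (θ : ℕ → Bool)
    (htwo : ∃ i j, i ≠ j ∧ (1 ≤ i ∧ i ≤ D) ∧ (1 ≤ j ∧ j ≤ D) ∧
      θ i = true ∧ θ j = true)
    (i₀ : ℕ) (hi₀ : IsLeast {i | (1 ≤ i ∧ i ≤ D) ∧ θ i = true} i₀)
    (θt : ℕ → Bool) (hθt : ∀ i, θt i = decide (i = i₀)) :
    (∑ i ∈ (Icc 1 D).filter (fun i => θt i = true), lam i) <
      (∑ i ∈ (Icc 1 D).filter (fun i => θ i = true), lam i) ∧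
    (∀ i, 1 ≤ i → i ≤ D →
      ((∃ l, 1 ≤ l ∧ l ≤ i ∧ θt l = true) ↔ (∃ l, 1 ≤ l ∧ l ≤ i ∧ θ l = true))) := by
  obtain ⟨⟨⟨h1i₀, hi₀D⟩, hθi₀⟩, hleast⟩ := hi₀
  -- θt-filter is exactly {i₀}
  have hset : (Icc 1 D).filter (fun i => θt i = true) = {i₀} := by
    ext x
    simp only [mem_filter, mem_Icc, mem_singleton, hθt, decide_eq_true_eq]
    constructor
    · rintro ⟨_, rfl⟩; rfl
    · rintro rfl; exact ⟨⟨h1i₀, hi₀D⟩, rfl⟩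
  constructor
  · rw [hset]
    obtain ⟨i, j, hij, hiI, hjI, hθi, hθj⟩ := htwo
    -- at least one of i, j differs from i₀
    obtain ⟨k, hkI, hθk, hki₀⟩ : ∃ k, (1 ≤ k ∧ k ≤ D) ∧ θ k = true ∧ k ≠ i₀ := by
      by_cases h : i = i₀
      · exact ⟨j, hjI, hθj, by rw [← h]; exact hij.symm⟩
      · exact ⟨i, hiI, hθi, h⟩
    have hsub : {i₀} ⊆ (Icc 1 D).filter (fun i => θ i = true) := by
      intro x hx
      rw [mem_singleton] at hx
      subst hx
      simp [mem_filter, mem_Icc, h1i₀, hi₀D, hθi₀]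
    apply Finset.sum_lt_sum_of_subset hsub (i := k)
    · simp [mem_filter, mem_Icc, hkI.1, hkI.2, hθk]
    · simpa using hki₀
    · exact hlam k hkI.1 hkI.2
    · intro x hx _
      rw [mem_filter, mem_Icc] at hx
      exact (hlam x hx.1.1 hx.1.2).le
  · intro i h1i hiD
    constructor
    · rintro ⟨l, h1l, hli, hθtl⟩
      rw [hθt, decide_eq_true_eq] at hθtl
      subst hθtl
      exact ⟨l, h1i₀, hli, hθi₀⟩
    · rintro ⟨l, h1l, hli, hθl⟩
      refine ⟨i₀, h1i₀, ?_, by simp [hθt]⟩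
      exact le_trans (hleast ⟨⟨h1l, le_trans hli hiD⟩, hθl⟩) hli
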